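/- With u_t defined as u_t(x) = η(|x|) x₁x₂ |x|^{2t} φ(−ln |x|²) (and u_t = 0 at 0 and for |x| ≥ 1), there is a constant B₃ depending only on η and φ such that for all 0 < t ≤ 1/2 and all j = 1,...,n, sup_{x ∈ ℝⁿ} |∂²u_t/∂x_j²(x)| ≤ B₃. In particular all pure second derivatives of u_t, and hence Δu_t, are bounded uniformly in t. -/

import Mathlib

open Real Filter Metric Set Classical

noncomputable def G0 (η φ : ℝ → ℝ) (t s : ℝ) : ℝ :=
  η (Real.sqrt s) * Real.exp (Real.log s * t) * φ (-Real.log s)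

noncomputable def G1 (η φ : ℝ → ℝ) (t s : ℝ) : ℝ :=
  (deriv η (Real.sqrt s) * (1 / (2 * Real.sqrt s)) * Real.exp (Real.log s * t)
      + η (Real.sqrt s) * (Real.exp (Real.log s * t) * (s⁻¹ * t))) * φ (-Real.log s)
    + η (Real.sqrt s) * Real.exp (Real.log s * t) * (deriv φ (-Real.log s) * -s⁻¹)

noncomputable def G2 (η φ : ℝ → ℝ) (t s : ℝ) : ℝ :=
  ((((deriv (deriv η) (Real.sqrt s) * (1 / (2 * Real.sqrt s))) * (1 / (2 * Real.sqrt s))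
        + deriv η (Real.sqrt s) * ((0 * (2 * Real.sqrt s) - 1 * (2 * (1 / (2 * Real.sqrt s)))) / (2 * Real.sqrt s) ^ 2))
          * Real.exp (Real.log s * t)
      + (deriv η (Real.sqrt s) * (1 / (2 * Real.sqrt s))) * (Real.exp (Real.log s * t) * (s⁻¹ * t))
    + ((deriv η (Real.sqrt s) * (1 / (2 * Real.sqrt s))) * (Real.exp (Real.log s * t) * (s⁻¹ * t))
      + η (Real.sqrt s) * ((Real.exp (Real.log s * t) * (s⁻¹ * t)) * (s⁻¹ * t)
          + Real.exp (Real.log s * t) * (-(s ^ 2)⁻¹ * t)))) * φ (-Real.log s)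
    + (deriv η (Real.sqrt s) * (1 / (2 * Real.sqrt s)) * Real.exp (Real.log s * t)
        + η (Real.sqrt s) * (Real.exp (Real.log s * t) * (s⁻¹ * t))) * (deriv φ (-Real.log s) * -s⁻¹))
  + ((((deriv η (Real.sqrt s) * (1 / (2 * Real.sqrt s))) * Real.exp (Real.log s * t)
        + η (Real.sqrt s) * (Real.exp (Real.log s * t) * (s⁻¹ * t))) * (deriv φ (-Real.log s) * -s⁻¹))
      + (η (Real.sqrt s) * Real.exp (Real.log s * t))
          * ((deriv (deriv φ) (-Real.log s) * -s⁻¹) * -s⁻¹ + deriv φ (-Real.log s) * -(-(s ^ 2)⁻¹)))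

section
variable {η φ : ℝ → ℝ}

-- zero of a continuous function at a boundary point from one side
lemma cont_zero_of_filter {g : ℝ → ℝ} (hg : Continuous g) {x : ℝ} {l : Filter ℝ} [l.NeBot]
    (hl : l ≤ nhds x) (h : ∀ᶠ y in l, g y = 0) : g x = 0 :=
  tendsto_nhds_unique ((hg.tendsto x).mono_left hl)
    (tendsto_const_nhds.congr' (h.mono fun _ hy => hy.symm))

lemma deriv_zero_of_local_const {f : ℝ → ℝ} {c x : ℝ} {U : Set ℝ} (hU : IsOpen U) (hx : x ∈ U)
    (h : ∀ y ∈ U, f y = c) : deriv f x = 0 := by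
  have he : f =ᶠ[nhds x] fun _ => c := eventually_of_mem (hU.mem_nhds hx) h
  rw [he.deriv_eq]; exact deriv_const x c

lemma eta_deriv_zero (hηsmooth : ContDiff ℝ (⊤ : ℕ∞) η)
    (hη1 : ∀ s : ℝ, 0 ≤ s → s ≤ 1/2 → η s = 1) (hη0 : ∀ s : ℝ, 2/3 ≤ s → η s = 0) :
    ∀ x : ℝ, ((0 < x ∧ x ≤ 1/2) ∨ 2/3 ≤ x) → deriv η x = 0 := by
  have hcont : Continuous (deriv η) := ((contDiff_infty_iff_deriv).mp (hηsmooth.of_le (by simp))).2.continuous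
  have hopen1 : ∀ x ∈ Ioo (0:ℝ) (1/2), deriv η x = 0 := fun x hx =>
    deriv_zero_of_local_const isOpen_Ioo hx (fun y hy => hη1 y hy.1.le hy.2.le)
  have hopen2 : ∀ x ∈ Ioi (2/3 : ℝ), deriv η x = 0 := fun x hx =>
    deriv_zero_of_local_const isOpen_Ioi hx (fun y hy => hη0 y (le_of_lt hy))
  rintro x (⟨hx0, hx2⟩ | hx)
  · rcases lt_or_eq_of_le hx2 with h | h
    · exact hopen1 x ⟨hx0, h⟩
    · subst h
      exact cont_zero_of_filter hcont nhdsWithin_le_nhds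
        (eventually_of_mem (Ioo_mem_nhdsLT_of_mem (by norm_num : (1/2:ℝ) ∈ Ioc (0:ℝ) (1/2)))
          (fun y hy => hopen1 y hy))
  · rcases lt_or_eq_of_le hx with h | h
    · exact hopen2 x h
    · subst h
      exact cont_zero_of_filter hcont nhdsWithin_le_nhds
        (eventually_of_mem (Ioo_mem_nhdsGT_of_mem (by norm_num : (2/3:ℝ) ∈ Ico (2/3:ℝ) 1))
          (fun y hy => hopen2 y hy.1))

lemma eta_deriv2_zero (hηsmooth : ContDiff ℝ (⊤ : ℕ∞) η)
    (hη1 : ∀ s : ℝ, 0 ≤ s → s ≤ 1/2 → η s = 1) (hη0 : ∀ s : ℝ, 2/3 ≤ s → η s = 0) :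
    ∀ x : ℝ, ((0 < x ∧ x ≤ 1/2) ∨ 2/3 ≤ x) → deriv (deriv η) x = 0 := by
  have hd : ContDiff ℝ (⊤:ℕ∞) (deriv η) := ((contDiff_infty_iff_deriv).mp (hηsmooth.of_le (by simp))).2
  have hcont : Continuous (deriv (deriv η)) := ((contDiff_infty_iff_deriv).mp (hd.of_le le_rfl)).2.continuous
  have hz := eta_deriv_zero hηsmooth hη1 hη0
  have hopen1 : ∀ x ∈ Ioo (0:ℝ) (1/2), deriv (deriv η) x = 0 := fun x hx =>
    deriv_zero_of_local_const isOpen_Ioo hx (fun y hy => hz y (Or.inl ⟨hy.1, hy.2.le⟩))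
  have hopen2 : ∀ x ∈ Ioi (2/3 : ℝ), deriv (deriv η) x = 0 := fun x hx =>
    deriv_zero_of_local_const isOpen_Ioi hx (fun y hy => hz y (Or.inr (le_of_lt hy)))
  rintro x (⟨hx0, hx2⟩ | hx)
  · rcases lt_or_eq_of_le hx2 with h | h
    · exact hopen1 x ⟨hx0, h⟩
    · subst h
      exact cont_zero_of_filter hcont nhdsWithin_le_nhds
        (eventually_of_mem (Ioo_mem_nhdsLT_of_mem (by norm_num : (1/2:ℝ) ∈ Ioc (0:ℝ) (1/2)))
          (fun y hy => hopen1 y hy))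
  · rcases lt_or_eq_of_le hx with h | h
    · exact hopen2 x h
    · subst h
      exact cont_zero_of_filter hcont nhdsWithin_le_nhds
        (eventually_of_mem (Ioo_mem_nhdsGT_of_mem (by norm_num : (2/3:ℝ) ∈ Ico (2/3:ℝ) 1))
          (fun y hy => hopen2 y hy.1))

end
section
variable {η φ : ℝ → ℝ}

lemma sqrt_ge_of (s : ℝ) (hs : 4/9 < s) : 2/3 < Real.sqrt s := by
  have : Real.sqrt (4/9) < Real.sqrt s := Real.sqrt_lt_sqrt (by norm_num) hs
  rwa [show (4/9 : ℝ) = (2/3)^2 by norm_num, Real.sqrt_sq (by norm_num : (0:ℝ) ≤ 2/3)] at this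

lemma G0_zero (hη0 : ∀ s : ℝ, 2/3 ≤ s → η s = 0) {s : ℝ} (hs : 4/9 < s) : G0 η φ t s = 0 := by
  unfold G0; rw [hη0 _ (sqrt_ge_of s hs).le]; ring

lemma G1_zero (hηsmooth : ContDiff ℝ (⊤ : ℕ∞) η)
    (hη1 : ∀ s : ℝ, 0 ≤ s → s ≤ 1/2 → η s = 1) (hη0 : ∀ s : ℝ, 2/3 ≤ s → η s = 0)
    {t s : ℝ} (hs : 4/9 < s) : G1 η φ t s = 0 := by
  unfold G1
  rw [hη0 _ (sqrt_ge_of s hs).le, eta_deriv_zero hηsmooth hη1 hη0 _ (Or.inr (sqrt_ge_of s hs).le)]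
  ring

lemma G2_zero (hηsmooth : ContDiff ℝ (⊤ : ℕ∞) η)
    (hη1 : ∀ s : ℝ, 0 ≤ s → s ≤ 1/2 → η s = 1) (hη0 : ∀ s : ℝ, 2/3 ≤ s → η s = 0)
    {t s : ℝ} (hs : 4/9 < s) : G2 η φ t s = 0 := by
  unfold G2
  rw [hη0 _ (sqrt_ge_of s hs).le, eta_deriv_zero hηsmooth hη1 hη0 _ (Or.inr (sqrt_ge_of s hs).le),
    eta_deriv2_zero hηsmooth hη1 hη0 _ (Or.inr (sqrt_ge_of s hs).le)]
  ring

lemma hasDerivAt_G0 (hφsmooth : ContDiffOn ℝ 2 φ (Set.Ioi 0)) (hηsmooth : ContDiff ℝ (⊤ : ℕ∞) η)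
    (hη1 : ∀ s : ℝ, 0 ≤ s → s ≤ 1/2 → η s = 1) (hη0 : ∀ s : ℝ, 2/3 ≤ s → η s = 0)
    {t s : ℝ} (hs : 0 < s) : HasDerivAt (G0 η φ t) (G1 η φ t s) s := by
  rcases lt_or_ge s 1 with h1 | h1
  · have hlog : HasDerivAt Real.log s⁻¹ s := Real.hasDerivAt_log hs.ne'
    have hA : HasDerivAt (fun s => η (Real.sqrt s)) (deriv η (Real.sqrt s) * (1 / (2 * Real.sqrt s))) s :=
      ((hηsmooth.differentiable (by simp) _).hasDerivAt).comp s (Real.hasDerivAt_sqrt hs.ne')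
    have hP : HasDerivAt (fun s => Real.exp (Real.log s * t)) (Real.exp (Real.log s * t) * (s⁻¹ * t)) s :=
      (Real.hasDerivAt_exp _).comp s (hlog.mul_const t)
    have hmem : -Real.log s ∈ Set.Ioi (0:ℝ) := by
      simp only [Set.mem_Ioi]; linarith [Real.log_neg hs h1]
    have hφd : HasDerivAt φ (deriv φ (-Real.log s)) (-Real.log s) :=
      (((hφsmooth.differentiableOn (by norm_num)) _ hmem).differentiableAt
        (Ioi_mem_nhds hmem)).hasDerivAt
    have hQ : HasDerivAt (fun s => φ (-Real.log s)) (deriv φ (-Real.log s) * -s⁻¹) s :=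
      hφd.comp s hlog.neg
    exact ((hA.mul hP).mul hQ)
  · have hev : G0 η φ t =ᶠ[nhds s] fun _ => 0 :=
      eventually_of_mem (isOpen_Ioi.mem_nhds (show (4/9:ℝ) < s by linarith))
        (fun y hy => G0_zero hη0 hy)
    rw [G1_zero hηsmooth hη1 hη0 (by linarith)]
    exact (hasDerivAt_const s 0).congr_of_eventuallyEq hev

lemma hasDerivAt_G1 (hφsmooth : ContDiffOn ℝ 2 φ (Set.Ioi 0)) (hηsmooth : ContDiff ℝ (⊤ : ℕ∞) η)
    (hη1 : ∀ s : ℝ, 0 ≤ s → s ≤ 1/2 → η s = 1) (hη0 : ∀ s : ℝ, 2/3 ≤ s → η s = 0)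
    {t s : ℝ} (hs : 0 < s) : HasDerivAt (G1 η φ t) (G2 η φ t s) s := by
  rcases lt_or_ge s 1 with h1 | h1
  · have hsqrt : (0:ℝ) < Real.sqrt s := Real.sqrt_pos.mpr hs
    have hlog : HasDerivAt Real.log s⁻¹ s := Real.hasDerivAt_log hs.ne'
    have hη' : ContDiff ℝ (⊤:ℕ∞) (deriv η) := ((contDiff_infty_iff_deriv).mp (hηsmooth.of_le (by simp))).2
    have hA : HasDerivAt (fun s => η (Real.sqrt s)) (deriv η (Real.sqrt s) * (1 / (2 * Real.sqrt s))) s :=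
      ((hηsmooth.differentiable (by simp) _).hasDerivAt).comp s (Real.hasDerivAt_sqrt hs.ne')
    have hN : HasDerivAt (fun s => deriv η (Real.sqrt s))
        (deriv (deriv η) (Real.sqrt s) * (1 / (2 * Real.sqrt s))) s :=
      ((hη'.differentiable (by simp) _).hasDerivAt).comp s (Real.hasDerivAt_sqrt hs.ne')
    have h2s : HasDerivAt (fun s => 2 * Real.sqrt s) (2 * (1 / (2 * Real.sqrt s))) s :=
      (Real.hasDerivAt_sqrt hs.ne').const_mul 2
    have hW : HasDerivAt (fun s => 1 / (2 * Real.sqrt s))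
        ((0 * (2 * Real.sqrt s) - 1 * (2 * (1 / (2 * Real.sqrt s)))) / (2 * Real.sqrt s) ^ 2) s :=
      (hasDerivAt_const s 1).div h2s (by positivity)
    have hP : HasDerivAt (fun s => Real.exp (Real.log s * t)) (Real.exp (Real.log s * t) * (s⁻¹ * t)) s :=
      (Real.hasDerivAt_exp _).comp s (hlog.mul_const t)
    have hV : HasDerivAt (fun s => s⁻¹ * t) (-(s ^ 2)⁻¹ * t) s :=
      (hasDerivAt_inv hs.ne').mul_const t
    have hmem : -Real.log s ∈ Set.Ioi (0:ℝ) := by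
      simp only [Set.mem_Ioi]; linarith [Real.log_neg hs h1]
    have hφd : HasDerivAt φ (deriv φ (-Real.log s)) (-Real.log s) :=
      (((hφsmooth.differentiableOn (by norm_num)) _ hmem).differentiableAt
        (Ioi_mem_nhds hmem)).hasDerivAt
    have hφ1 : ContDiffOn ℝ 1 (deriv φ) (Set.Ioi 0) :=
      hφsmooth.deriv_of_isOpen isOpen_Ioi (by norm_num)
    have hφd2 : HasDerivAt (deriv φ) (deriv (deriv φ) (-Real.log s)) (-Real.log s) :=
      (((hφ1.differentiableOn (by norm_num)) _ hmem).differentiableAt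
        (Ioi_mem_nhds hmem)).hasDerivAt
    have hQ : HasDerivAt (fun s => φ (-Real.log s)) (deriv φ (-Real.log s) * -s⁻¹) s :=
      hφd.comp s hlog.neg
    have hN2 : HasDerivAt (fun s => deriv φ (-Real.log s))
        (deriv (deriv φ) (-Real.log s) * -s⁻¹) s := by
      have h := hφd2.comp s hlog.neg; exact h
    have hM : HasDerivAt (fun s : ℝ => -s⁻¹) (-(-(s ^ 2)⁻¹)) s := (hasDerivAt_inv hs.ne').neg
    have hB1 := (hN.mul hW).mul hP
    have hB2 := hA.mul (hP.mul hV)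
    have hC3 := hA.mul hP
    have hC4 := hN2.mul hM
    exact (((hB1.add hB2).mul hQ).add (hC3.mul hC4))
  · have hev : G1 η φ t =ᶠ[nhds s] fun _ => 0 :=
      eventually_of_mem (isOpen_Ioi.mem_nhds (show (4/9:ℝ) < s by linarith))
        (fun y hy => G1_zero hηsmooth hη1 hη0 hy)
    rw [G2_zero hηsmooth hη1 hη0 (by linarith)]
    exact (hasDerivAt_const s 0).congr_of_eventuallyEq hev

end
section
variable {η φ : ℝ → ℝ}

lemma bound_of_tendsto {f : ℝ → ℝ} {c : ℝ} (hf : ContinuousOn f (Set.Ici c))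
    (h0 : Tendsto f atTop (nhds 0)) : ∃ M : ℝ, 0 ≤ M ∧ ∀ y, c ≤ y → |f y| ≤ M := by
  have hev : ∀ᶠ y in atTop, |f y| < 1 := by
    have := h0.eventually (Metric.ball_mem_nhds (0:ℝ) one_pos)
    filter_upwards [this] with y hy
    simpa [Real.dist_eq] using hy
  obtain ⟨N, hN⟩ := eventually_atTop.mp hev
  obtain ⟨M₀, hM₀⟩ := (isCompact_Icc (a := c) (b := max N c)).exists_bound_of_continuousOn
    (hf.mono (fun y hy => hy.1))
  refine ⟨max M₀ 1, le_trans (by norm_num) (le_max_right _ _), fun y hy => ?_⟩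
  rcases le_or_gt y (max N c) with h | h
  · exact le_trans (by simpa using hM₀ y ⟨hy, h⟩) (le_max_left _ _)
  · exact le_trans (hN y (le_of_lt (lt_of_le_of_lt (le_max_left N c) h))).le (le_max_right _ _)

lemma phi_growth {c : ℝ} (hc : 0 < c) (hφsmooth : ContDiffOn ℝ 2 φ (Set.Ioi 0))
    {M₁ : ℝ} (hM₁ : ∀ y, c ≤ y → |deriv φ y| ≤ M₁) :
    ∀ y, c ≤ y → |φ y| ≤ (|φ c| + M₁) * (1 + y) := by
  intro y hy
  have hdiff : ∀ x ∈ Set.Icc c y, HasDerivWithinAt φ (deriv φ x) (Set.Icc c y) x := by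
    intro x hx
    have hx0 : x ∈ Set.Ioi (0:ℝ) := lt_of_lt_of_le hc hx.1
    exact (((hφsmooth.differentiableOn (by norm_num)) _ hx0).differentiableAt
      (Ioi_mem_nhds hx0)).hasDerivAt.hasDerivWithinAt
  have hbd : ∀ x ∈ Set.Icc c y, ‖deriv φ x‖ ≤ M₁ := fun x hx => hM₁ x hx.1
  have := (convex_Icc c y).norm_image_sub_le_of_norm_hasDerivWithin_le hdiff hbd
    (Set.left_mem_Icc.mpr hy) (Set.right_mem_Icc.mpr hy)
  have hM₁0 : 0 ≤ M₁ := le_trans (abs_nonneg _) (hM₁ c le_rfl)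
  have h1 : |φ y - φ c| ≤ M₁ * (y - c) := by
    simpa [Real.norm_eq_abs, abs_of_nonneg (sub_nonneg.mpr hy)] using this
  have h2 : |φ y| ≤ |φ c| + M₁ * (y - c) := by
    have := abs_sub_abs_le_abs_sub (φ y) (φ c)
    linarith
  nlinarith [abs_nonneg (φ c)]

lemma kexp {t y : ℝ} (ht : 0 < t) (ht1 : t ≤ 1) (hy : 0 ≤ y) :
    t * Real.exp (-(t * y)) * (1 + y) ≤ 2 := by
  have h1 : Real.exp (-(t * y)) ≤ 1 := Real.exp_le_one_iff.mpr (by nlinarith)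
  have h2 : t * y ≤ Real.exp (t * y) := by nlinarith [Real.add_one_le_exp (t * y)]
  have h3 : Real.exp (-(t * y)) * Real.exp (t * y) = 1 := by
    rw [← Real.exp_add]; simp
  have h4 : 0 < Real.exp (-(t * y)) := Real.exp_pos _
  have h5 : t * y * Real.exp (-(t * y)) ≤ 1 := by nlinarith
  nlinarith
end
section
variable {η φ : ℝ → ℝ}

set_option maxHeartbeats 2000000 in
lemma keybound (hφsmooth : ContDiffOn ℝ 2 φ (Set.Ioi 0))
    (hφ' : Tendsto (deriv φ) atTop (nhds 0))
    (hφ'' : Tendsto (deriv (deriv φ)) atTop (nhds 0))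
    (hηsmooth : ContDiff ℝ (⊤ : ℕ∞) η)
    (hη1 : ∀ s : ℝ, 0 ≤ s → s ≤ 1/2 → η s = 1) (hη0 : ∀ s : ℝ, 2/3 ≤ s → η s = 0) :
    ∃ K : ℝ, 0 ≤ K ∧ ∀ t : ℝ, 0 < t → t ≤ 1/2 → ∀ s : ℝ, 0 < s →
      |s * G1 η φ t s| ≤ K ∧ |s ^ 2 * G2 η φ t s| ≤ K := by
  have hc : (0:ℝ) < Real.log 4 := Real.log_pos (by norm_num)
  -- bounds on deriv φ, deriv (deriv φ) on [log 4, ∞)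
  have hφ1cont : ContinuousOn (deriv φ) (Set.Ici (Real.log 4)) :=
    (hφsmooth.continuousOn_deriv_of_isOpen isOpen_Ioi (by norm_num)).mono
      (fun y hy => lt_of_lt_of_le hc hy)
  have hφ2cont : ContinuousOn (deriv (deriv φ)) (Set.Ici (Real.log 4)) :=
    ((hφsmooth.deriv_of_isOpen (m := 1) isOpen_Ioi (by norm_num)).continuousOn_deriv_of_isOpen
      isOpen_Ioi (by norm_num)).mono (fun y hy => lt_of_lt_of_le hc hy)
  obtain ⟨M₁, hM₁0, hM₁⟩ := bound_of_tendsto hφ1cont hφ'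
  obtain ⟨M₂, hM₂0, hM₂⟩ := bound_of_tendsto hφ2cont hφ''
  set Cφ := |φ (Real.log 4)| + M₁ with hCφ
  have hCφ0 : 0 ≤ Cφ := by positivity
  have hφg : ∀ y, Real.log 4 ≤ y → |φ y| ≤ Cφ * (1 + y) := phi_growth hc hφsmooth hM₁
  -- compact bound on the middle region
  obtain ⟨Mc, hMc⟩ : ∃ Mc : ℝ, ∀ q ∈ (Set.Icc (0:ℝ) (1/2) ×ˢ Set.Icc (1/4:ℝ) (1/2)),
      ‖|q.2 * G1 η φ q.1 q.2| + |q.2 ^ 2 * G2 η φ q.1 q.2|‖ ≤ Mc := by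
    apply (isCompact_Icc.prod isCompact_Icc).exists_bound_of_continuousOn
    set K' : Set (ℝ × ℝ) := Set.Icc (0:ℝ) (1/2) ×ˢ Set.Icc (1/4:ℝ) (1/2) with hK'
    have hsne : ∀ q ∈ K', q.2 ≠ 0 := fun q hq => by
      have h14 : (1/4:ℝ) ≤ q.2 := hq.2.1
      intro h; rw [h] at h14; norm_num at h14
    have hspos : ∀ q ∈ K', 0 < q.2 := fun q hq => lt_of_lt_of_le (by norm_num) hq.2.1
    have c_snd : ContinuousOn (fun q : ℝ × ℝ => q.2) K' := continuous_snd.continuousOn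
    have c_fst : ContinuousOn (fun q : ℝ × ℝ => q.1) K' := continuous_fst.continuousOn
    have c_sqrt : ContinuousOn (fun q : ℝ × ℝ => Real.sqrt q.2) K' :=
      (Real.continuous_sqrt.comp continuous_snd).continuousOn
    have hsqrtpos : ∀ q ∈ K', 0 < Real.sqrt q.2 := fun q hq => Real.sqrt_pos.mpr (hspos q hq)
    have hηc : Continuous η := hηsmooth.continuous
    have hη'c : Continuous (deriv η) :=
      ((contDiff_infty_iff_deriv).mp (hηsmooth.of_le (by simp))).2.continuous
    have hη''c : Continuous (deriv (deriv η)) :=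
      ((contDiff_infty_iff_deriv).mp
        (((contDiff_infty_iff_deriv).mp (hηsmooth.of_le (by simp))).2.of_le le_rfl)).2.continuous
    have c_eta : ContinuousOn (fun q : ℝ × ℝ => η (Real.sqrt q.2)) K' :=
      (hηc.comp (Real.continuous_sqrt.comp continuous_snd)).continuousOn
    have c_deta : ContinuousOn (fun q : ℝ × ℝ => deriv η (Real.sqrt q.2)) K' :=
      (hη'c.comp (Real.continuous_sqrt.comp continuous_snd)).continuousOn
    have c_d2eta : ContinuousOn (fun q : ℝ × ℝ => deriv (deriv η) (Real.sqrt q.2)) K' :=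
      (hη''c.comp (Real.continuous_sqrt.comp continuous_snd)).continuousOn
    have c_log : ContinuousOn (fun q : ℝ × ℝ => Real.log q.2) K' :=
      Real.continuousOn_log.comp c_snd (fun q hq => hsne q hq)
    have c_p : ContinuousOn (fun q : ℝ × ℝ => Real.exp (Real.log q.2 * q.1)) K' :=
      Real.continuous_exp.comp_continuousOn (c_log.mul c_fst)
    have c_inv : ContinuousOn (fun q : ℝ × ℝ => (q.2)⁻¹) K' := c_snd.inv₀ hsne
    have c_inv2 : ContinuousOn (fun q : ℝ × ℝ => ((q.2) ^ 2)⁻¹) K' :=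
      (c_snd.pow 2).inv₀ (fun q hq => pow_ne_zero 2 (hsne q hq))
    have c_2sqrt : ContinuousOn (fun q : ℝ × ℝ => 2 * Real.sqrt q.2) K' :=
      continuousOn_const.mul c_sqrt
    have h2sne : ∀ q ∈ K', 2 * Real.sqrt q.2 ≠ 0 := fun q hq =>
      ne_of_gt (by have := hsqrtpos q hq; linarith)
    have c_w : ContinuousOn (fun q : ℝ × ℝ => 1 / (2 * Real.sqrt q.2)) K' :=
      continuousOn_const.div c_2sqrt h2sne
    have hmemIoi : ∀ q ∈ K', -Real.log q.2 ∈ Set.Ioi (0:ℝ) := fun q hq => by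
      have h1 : q.2 ≤ 1/2 := hq.2.2
      have := Real.log_neg (hspos q hq) (lt_of_le_of_lt h1 (by norm_num))
      simp only [Set.mem_Ioi]; linarith
    have hφc : ContinuousOn φ (Set.Ioi 0) := hφsmooth.continuousOn
    have hφ1c : ContinuousOn (deriv φ) (Set.Ioi 0) :=
      hφsmooth.continuousOn_deriv_of_isOpen isOpen_Ioi (by norm_num)
    have hφ2c : ContinuousOn (deriv (deriv φ)) (Set.Ioi 0) :=
      (hφsmooth.deriv_of_isOpen (m := 1) isOpen_Ioi (by norm_num)).continuousOn_deriv_of_isOpen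
        isOpen_Ioi (by norm_num)
    have c_f0 : ContinuousOn (fun q : ℝ × ℝ => φ (-Real.log q.2)) K' :=
      hφc.comp c_log.neg hmemIoi
    have c_f1 : ContinuousOn (fun q : ℝ × ℝ => deriv φ (-Real.log q.2)) K' :=
      hφ1c.comp c_log.neg hmemIoi
    have c_f2 : ContinuousOn (fun q : ℝ × ℝ => deriv (deriv φ) (-Real.log q.2)) K' :=
      hφ2c.comp c_log.neg hmemIoi
    have c_v : ContinuousOn (fun q : ℝ × ℝ => (q.2)⁻¹ * q.1) K' := c_inv.mul c_fst
    have c_G1 : ContinuousOn (fun q : ℝ × ℝ => G1 η φ q.1 q.2) K' := by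
      unfold G1
      exact (((c_deta.mul c_w).mul c_p).add (c_eta.mul (c_p.mul c_v))).mul c_f0 |>.add
        ((c_eta.mul c_p).mul (c_f1.mul c_inv.neg))
    have c_wd : ContinuousOn (fun q : ℝ × ℝ =>
        (0 * (2 * Real.sqrt q.2) - 1 * (2 * (1 / (2 * Real.sqrt q.2)))) / (2 * Real.sqrt q.2) ^ 2) K' :=
      ((continuousOn_const.mul c_2sqrt).sub (continuousOn_const.mul (continuousOn_const.mul
        c_w))).div (c_2sqrt.pow 2) (fun q hq => pow_ne_zero 2 (h2sne q hq))
    have c_B1 := ((c_d2eta.mul c_w).mul c_w).add (c_deta.mul c_wd)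
    have c_DB1 := (c_B1.mul c_p).add ((c_deta.mul c_w).mul (c_p.mul c_v))
    have c_DB2 := ((c_deta.mul c_w).mul (c_p.mul c_v)).add
      (c_eta.mul (((c_p.mul c_v).mul c_v).add (c_p.mul (c_inv2.neg.mul c_fst))))
    have c_sumB := ((c_deta.mul c_w).mul c_p).add (c_eta.mul (c_p.mul c_v))
    have c_DC4 := ((c_f2.mul c_inv.neg).mul c_inv.neg).add (c_f1.mul c_inv2.neg.neg)
    have c_G2 : ContinuousOn (fun q : ℝ × ℝ => G2 η φ q.1 q.2) K' := by
      unfold G2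
      exact (((c_DB1.add c_DB2).mul c_f0).add (c_sumB.mul (c_f1.mul c_inv.neg))).add
        ((c_sumB.mul (c_f1.mul c_inv.neg)).add ((c_eta.mul c_p).mul c_DC4))
    exact ((c_snd.mul c_G1).abs.add ((c_snd.pow 2).mul c_G2).abs)
  refine ⟨max (4*Cφ + 4*M₁ + M₂ + 2) Mc, le_trans (by positivity) (le_max_left _ _), ?_⟩
  intro t ht ht2 s hs
  rcases le_or_gt s (1/4) with hs14 | hs14
  · -- small s
    have hsq : Real.sqrt s ≤ 1/2 := by
      have h := Real.sqrt_le_sqrt hs14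
      rwa [show (1/4:ℝ) = (1/2)^2 by norm_num, Real.sqrt_sq (by norm_num : (0:ℝ) ≤ 1/2)] at h
    have ha : η (Real.sqrt s) = 1 := hη1 _ (Real.sqrt_nonneg s) hsq
    have ha1 : deriv η (Real.sqrt s) = 0 :=
      eta_deriv_zero hηsmooth hη1 hη0 _ (Or.inl ⟨Real.sqrt_pos.mpr hs, hsq⟩)
    have ha2 : deriv (deriv η) (Real.sqrt s) = 0 :=
      eta_deriv2_zero hηsmooth hη1 hη0 _ (Or.inl ⟨Real.sqrt_pos.mpr hs, hsq⟩)
    have h4 : (4:ℝ) ≤ s⁻¹ := by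
      rw [show s⁻¹ = 1/s by ring, le_div_iff₀ hs]; linarith
    have hy : Real.log 4 ≤ -Real.log s := by
      rw [← Real.log_inv]; exact Real.log_le_log (by norm_num) h4
    have hy0 : (0:ℝ) ≤ -Real.log s := le_trans hc.le hy
    have hp0 : (0:ℝ) < Real.exp (Real.log s * t) := Real.exp_pos _
    have hlogle : Real.log s ≤ 0 := Real.log_nonpos hs.le (by linarith)
    have hp1 : Real.exp (Real.log s * t) ≤ 1 :=
      Real.exp_le_one_iff.mpr (by nlinarith)
    have hkexp : t * Real.exp (Real.log s * t) * (1 + -Real.log s) ≤ 2 := by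
      have h := kexp ht (by linarith) hy0
      rwa [show -(t * -Real.log s) = Real.log s * t by ring] at h
    have hf0 : |φ (-Real.log s)| ≤ Cφ * (1 + -Real.log s) := hφg _ hy
    have hf1 : |deriv φ (-Real.log s)| ≤ M₁ := hM₁ _ hy
    have hf2 : |deriv (deriv φ) (-Real.log s)| ≤ M₂ := hM₂ _ hy
    have e0 : t * (Real.exp (Real.log s * t) * |φ (-Real.log s)|) ≤ 2 * Cφ := by
      nlinarith [mul_le_mul_of_nonneg_left hf0 (mul_pos ht hp0).le,
        mul_le_mul_of_nonneg_left hkexp hCφ0]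
    have e2 : Real.exp (Real.log s * t) * |deriv φ (-Real.log s)| ≤ M₁ := by
      nlinarith [abs_nonneg (deriv φ (-Real.log s))]
    have e3 : Real.exp (Real.log s * t) * |deriv (deriv φ) (-Real.log s)| ≤ M₂ := by
      nlinarith [abs_nonneg (deriv (deriv φ) (-Real.log s))]
    constructor
    · have eqG1 : s * G1 η φ t s =
          t * (Real.exp (Real.log s * t) * φ (-Real.log s))
            - Real.exp (Real.log s * t) * deriv φ (-Real.log s) := by
        unfold G1; rw [ha, ha1]; field_simp; ring
      rw [eqG1]
      refine le_trans ?_ (le_trans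
        (show 2 * Cφ + M₁ ≤ 4*Cφ + 4*M₁ + M₂ + 2 by linarith) (le_max_left _ _))
      have hA'b : |t * (Real.exp (Real.log s * t) * φ (-Real.log s))| ≤ 2 * Cφ := by
        rw [abs_mul, abs_mul, abs_of_pos ht, abs_of_pos hp0]; exact e0
      have hB'b : |Real.exp (Real.log s * t) * deriv φ (-Real.log s)| ≤ M₁ := by
        rw [abs_mul, abs_of_pos hp0]; exact e2
      calc |t * (Real.exp (Real.log s * t) * φ (-Real.log s))
            - Real.exp (Real.log s * t) * deriv φ (-Real.log s)|
          ≤ |t * (Real.exp (Real.log s * t) * φ (-Real.log s))|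
            + |Real.exp (Real.log s * t) * deriv φ (-Real.log s)| := abs_sub _ _
        _ ≤ 2 * Cφ + M₁ := add_le_add hA'b hB'b
    · have eqG2 : s ^ 2 * G2 η φ t s =
          t * (t - 1) * (Real.exp (Real.log s * t) * φ (-Real.log s))
            - 2 * (t * (Real.exp (Real.log s * t) * deriv φ (-Real.log s)))
            + Real.exp (Real.log s * t) * deriv (deriv φ) (-Real.log s)
            + Real.exp (Real.log s * t) * deriv φ (-Real.log s) := by
        unfold G2; rw [ha, ha1, ha2]; field_simp; ring
      rw [eqG2]
      have ht1 : |t - 1| ≤ 1 := by rw [abs_le]; constructor <;> linarith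
      have hAb : |t * (t - 1) * (Real.exp (Real.log s * t) * φ (-Real.log s))| ≤ 2 * Cφ := by
        rw [abs_mul, abs_mul, abs_mul, abs_of_pos ht, abs_of_pos hp0]
        calc t * |t - 1| * (Real.exp (Real.log s * t) * |φ (-Real.log s)|)
            = |t - 1| * (t * (Real.exp (Real.log s * t) * |φ (-Real.log s)|)) := by ring
          _ ≤ 1 * (2 * Cφ) := mul_le_mul ht1 e0 (by positivity) (by norm_num)
          _ = 2 * Cφ := by ring
      have hBb : |2 * (t * (Real.exp (Real.log s * t) * deriv φ (-Real.log s)))| ≤ 2 * M₁ := by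
        rw [abs_mul, abs_mul, abs_mul, abs_of_pos ht, abs_of_pos hp0,
          show |(2:ℝ)| = 2 by norm_num]
        nlinarith [mul_le_mul_of_nonneg_left e2 ht.le]
      have hCb : |Real.exp (Real.log s * t) * deriv (deriv φ) (-Real.log s)| ≤ M₂ := by
        rw [abs_mul, abs_of_pos hp0]; exact e3
      have hDb : |Real.exp (Real.log s * t) * deriv φ (-Real.log s)| ≤ M₁ := by
        rw [abs_mul, abs_of_pos hp0]; exact e2
      refine le_trans ?_ (le_trans
        (show 2*Cφ + 2*M₁ + M₂ + M₁ ≤ 4*Cφ + 4*M₁ + M₂ + 2 by linarith) (le_max_left _ _))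
      calc |t * (t - 1) * (Real.exp (Real.log s * t) * φ (-Real.log s))
            - 2 * (t * (Real.exp (Real.log s * t) * deriv φ (-Real.log s)))
            + Real.exp (Real.log s * t) * deriv (deriv φ) (-Real.log s)
            + Real.exp (Real.log s * t) * deriv φ (-Real.log s)|
          ≤ |t * (t - 1) * (Real.exp (Real.log s * t) * φ (-Real.log s))
            - 2 * (t * (Real.exp (Real.log s * t) * deriv φ (-Real.log s)))
            + Real.exp (Real.log s * t) * deriv (deriv φ) (-Real.log s)|
            + |Real.exp (Real.log s * t) * deriv φ (-Real.log s)| := abs_add_le _ _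
        _ ≤ |t * (t - 1) * (Real.exp (Real.log s * t) * φ (-Real.log s))
            - 2 * (t * (Real.exp (Real.log s * t) * deriv φ (-Real.log s)))|
            + |Real.exp (Real.log s * t) * deriv (deriv φ) (-Real.log s)|
            + |Real.exp (Real.log s * t) * deriv φ (-Real.log s)| := by
              linarith [abs_add_le (t * (t - 1) * (Real.exp (Real.log s * t) * φ (-Real.log s))
                - 2 * (t * (Real.exp (Real.log s * t) * deriv φ (-Real.log s))))
                (Real.exp (Real.log s * t) * deriv (deriv φ) (-Real.log s))]
        _ ≤ |t * (t - 1) * (Real.exp (Real.log s * t) * φ (-Real.log s))|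
            + |2 * (t * (Real.exp (Real.log s * t) * deriv φ (-Real.log s)))|
            + |Real.exp (Real.log s * t) * deriv (deriv φ) (-Real.log s)|
            + |Real.exp (Real.log s * t) * deriv φ (-Real.log s)| := by
              linarith [abs_sub (t * (t - 1) * (Real.exp (Real.log s * t) * φ (-Real.log s)))
                (2 * (t * (Real.exp (Real.log s * t) * deriv φ (-Real.log s))))]
        _ ≤ 2*Cφ + 2*M₁ + M₂ + M₁ := by linarith
  · rcases le_or_gt s (1/2) with hs12 | hs12
    · have hmem : ((t, s) : ℝ × ℝ) ∈ Set.Icc (0:ℝ) (1/2) ×ˢ Set.Icc (1/4:ℝ) (1/2) :=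
        ⟨⟨ht.le, ht2⟩, ⟨hs14.le, hs12⟩⟩
      have h := hMc _ hmem
      rw [Real.norm_eq_abs] at h
      have h1 : |(|s * G1 η φ t s| + |s ^ 2 * G2 η φ t s|)|
          = |s * G1 η φ t s| + |s ^ 2 * G2 η φ t s| :=
        abs_of_nonneg (by positivity)
      rw [h1] at h
      constructor
      · exact le_trans (by nlinarith [abs_nonneg (s ^ 2 * G2 η φ t s)]) (le_max_right _ _)
      · exact le_trans (by nlinarith [abs_nonneg (s * G1 η φ t s)]) (le_max_right _ _)
    · have hz1 : G1 η φ t s = 0 := G1_zero hηsmooth hη1 hη0 (by linarith)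
      have hz2 : G2 η φ t s = 0 := G2_zero hηsmooth hη1 hη0 (by linarith)
      rw [hz1, hz2]
      constructor <;> simp only [mul_zero, abs_zero] <;>
        exact le_trans (by positivity) (le_max_left (4*Cφ + 4*M₁ + M₂ + 2) Mc)
end
set_option maxHeartbeats 2000000 in
/-- Uniform (in t) bound on the pure second partial derivatives of
u_t(x) = η(|x|) x₁ x₂ |x|^{2t} φ(−ln|x|²); hence Δu_t is bounded uniformly in t. -/
theorem stmt9 (n : ℕ) (hn : 2 ≤ n) (φ η : ℝ → ℝ)
    (hφsmooth : ContDiffOn ℝ 2 φ (Set.Ioi 0))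
    (hφ : Tendsto φ atTop atTop)
    (hφ' : Tendsto (deriv φ) atTop (nhds 0))
    (hφ'' : Tendsto (deriv (deriv φ)) atTop (nhds 0))
    (hηsmooth : ContDiff ℝ (⊤ : ℕ∞) η)
    (hηmono : AntitoneOn η (Set.Ici 0))
    (hηrange : ∀ s : ℝ, 0 ≤ s → η s ∈ Set.Icc (0:ℝ) 1)
    (hη1 : ∀ s : ℝ, 0 ≤ s → s ≤ 1/2 → η s = 1)
    (hη0 : ∀ s : ℝ, 2/3 ≤ s → η s = 0)
    (u : ℝ → EuclideanSpace ℝ (Fin n) → ℝ)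
    (hu : ∀ t : ℝ, ∀ x : EuclideanSpace ℝ (Fin n),
      u t x = if x = 0 ∨ 1 ≤ ‖x‖ then 0
        else η ‖x‖ * x ⟨0, by omega⟩ * x ⟨1, by omega⟩ * ‖x‖ ^ (2 * t)
              * φ (-Real.log (‖x‖ ^ (2:ℕ)))) :
    ∃ B₃ : ℝ, ∀ t : ℝ, 0 < t → t ≤ 1/2 → ∀ j : Fin n,
      ∀ x : EuclideanSpace ℝ (Fin n),
        |fderiv ℝ (fun y => fderiv ℝ (u t) y (EuclideanSpace.single j 1)) x
          (EuclideanSpace.single j 1)| ≤ B₃ := by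
  obtain ⟨K, hK0, hK⟩ := keybound hφsmooth hφ' hφ'' hηsmooth hη1 hη0
  refine ⟨14 * K, ?_⟩
  intro t ht ht2 j x
  set i0 : Fin n := ⟨0, by omega⟩ with hi0
  set i1 : Fin n := ⟨1, by omega⟩ with hi1
  set v : EuclideanSpace ℝ (Fin n) := EuclideanSpace.single j 1 with hv
  have hvnorm : ‖v‖ = 1 := by rw [hv]; simp
  have hvne : v ≠ 0 := by intro h; rw [h] at hvnorm; simp at hvnorm
  have h01 : i0 ≠ i1 := by rw [hi0, hi1]; exact Fin.ne_of_val_ne (by norm_num)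
  have hv01 : v i0 * v i1 = 0 := by
    by_cases h0 : i0 = j
    · have h1' : ¬ (i1 = j) := fun h => h01 (h0.trans h.symm)
      rw [hv]; simp [EuclideanSpace.single_apply, h1']
    · rw [hv]; simp [EuclideanSpace.single_apply, h0]
  have hvj : v j = 1 := by rw [hv]; simp [EuclideanSpace.single_apply]
  have habs : ∀ (z : EuclideanSpace ℝ (Fin n)) (i : Fin n), |z i| ≤ ‖z‖ := fun z i => by
    have h := abs_real_inner_le_norm z (EuclideanSpace.single i (1:ℝ))
    simpa [EuclideanSpace.inner_single_right] using h
  have hvb : ∀ i : Fin n, |v i| ≤ 1 := fun i => le_trans (habs v i) (le_of_eq hvnorm)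
  -- u agrees with the smooth expression away from 0
  have hUeq : ∀ y : EuclideanSpace ℝ (Fin n), y ≠ 0 →
      u t y = y i0 * y i1 * G0 η φ t (‖y‖ ^ 2) := by
    intro y hy
    have hynorm : 0 < ‖y‖ := norm_pos_iff.mpr hy
    rw [hu]
    by_cases h1 : 1 ≤ ‖y‖
    · rw [if_pos (Or.inr h1)]
      unfold G0
      rw [Real.sqrt_sq (norm_nonneg y), hη0 _ (by linarith)]
      ring
    · rw [if_neg (by simp [hy, h1])]
      unfold G0
      rw [Real.sqrt_sq (norm_nonneg y)]
      rw [show Real.exp (Real.log (‖y‖ ^ 2) * t) = ‖y‖ ^ (2 * t) by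
        rw [Real.rpow_def_of_pos hynorm, Real.log_pow]; congr 1; push_cast; ring]
      ring
  -- the first derivative in direction v, away from 0
  have hfdF : ∀ y : EuclideanSpace ℝ (Fin n), y ≠ 0 →
      fderiv ℝ (u t) y v =
        y i0 * y i1 * (G1 η φ t (‖y‖ ^ 2) * (2 * y j))
          + G0 η φ t (‖y‖ ^ 2) * (y i0 * v i1 + y i1 * v i0) := by
    intro y hy
    have hynorm : 0 < ‖y‖ := norm_pos_iff.mpr hy
    have hs2 : (0:ℝ) < ‖y‖ ^ 2 := by positivity
    have hS := (hasStrictFDerivAt_norm_sq y).hasFDerivAt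
    have hGS := (hasDerivAt_G0 (t := t) hφsmooth hηsmooth hη1 hη0 hs2).comp_hasFDerivAt y hS
    have hc0 := (EuclideanSpace.proj i0 : EuclideanSpace ℝ (Fin n) →L[ℝ] ℝ).hasFDerivAt (x := y)
    have hc1 := (EuclideanSpace.proj i1 : EuclideanSpace ℝ (Fin n) →L[ℝ] ℝ).hasFDerivAt (x := y)
    have hev : u t =ᶠ[nhds y]
        (fun z : EuclideanSpace ℝ (Fin n) => z i0 * z i1 * G0 η φ t (‖z‖ ^ 2)) :=
      eventually_of_mem (isOpen_compl_singleton.mem_nhds hy) (fun z hz => hUeq z hz)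
    have hUat : HasFDerivAt (u t)
        ((y i0 * y i1) • (G1 η φ t (‖y‖ ^ 2) • (2 • (innerSL ℝ y)))
          + G0 η φ t (‖y‖ ^ 2) • ((y i0) • (EuclideanSpace.proj i1 : EuclideanSpace ℝ (Fin n) →L[ℝ] ℝ)
            + (y i1) • (EuclideanSpace.proj i0 : EuclideanSpace ℝ (Fin n) →L[ℝ] ℝ))) y :=
      ((hc0.mul hc1).mul hGS).congr_of_eventuallyEq hev
    rw [hUat.fderiv]
    simp only [ContinuousLinearMap.add_apply, ContinuousLinearMap.smul_apply,
      innerSL_apply_apply, smul_eq_mul, PiLp.proj_apply]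
    rw [show (inner ℝ y v) = y j by rw [hv]; simp [EuclideanSpace.inner_single_right]]
    ring
  by_cases hx : x = 0
  · -- at the origin: the directional restriction vanishes identically
    subst hx
    by_cases hdiff : DifferentiableAt ℝ (fun y => fderiv ℝ (u t) y v) 0
    · have hzero : ∀ c : ℝ, c ≠ 0 → fderiv ℝ (u t) (c • v) v = 0 := by
        intro c hc
        have hcv : c • v ≠ 0 := smul_ne_zero hc hvne
        rw [hfdF _ hcv]
        have e0 : (c • v) i0 = c * v i0 := rfl
        have e1 : (c • v) i1 = c * v i1 := rfl
        have ej : (c • v) j = c * v j := rfl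
        rw [e0, e1, ej]
        linear_combination (c * c * (G1 η φ t (‖c • v‖ ^ 2) * (2 * (c * v j)))
          + 2 * c * G0 η φ t (‖c • v‖ ^ 2)) * hv01
      have hline : HasDerivAt (fun c : ℝ => fderiv ℝ (u t) (c • v) v)
          (fderiv ℝ (fun y => fderiv ℝ (u t) y v) 0 v) 0 := by
        have h1 : HasDerivAt (fun c : ℝ => c • v) ((1:ℝ) • v) 0 :=
          (hasDerivAt_id (0:ℝ)).smul_const v
        have h2 := hdiff.hasFDerivAt
        rw [show (0 : EuclideanSpace ℝ (Fin n)) = (0:ℝ) • v by simp] at h2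
        have h3 := h2.comp_hasDerivAt (0:ℝ) h1
        rw [zero_smul, one_smul] at h3
        exact h3
      have hsl := hasDerivAt_iff_tendsto_slope.mp hline
      have hid : Tendsto (fun c : ℝ => c) (nhdsWithin (0:ℝ) {(0:ℝ)}ᶜ) (nhds 0) :=
        (continuous_id.tendsto 0).mono_left nhdsWithin_le_nhds
      have hmul := hsl.mul hid
      have hconst : Tendsto (fun _ : ℝ => -(fderiv ℝ (u t) ((0:ℝ) • v) v))
          (nhdsWithin (0:ℝ) {(0:ℝ)}ᶜ) (nhds (fderiv ℝ (fun y => fderiv ℝ (u t) y v) 0 v * 0)) := by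
        apply hmul.congr'
        filter_upwards [self_mem_nhdsWithin] with c hc
        have hc' : c ≠ 0 := hc
        rw [slope_def_field, hzero c hc']
        field_simp
        ring
      have hf00 : -(fderiv ℝ (u t) ((0:ℝ) • v) v) = fderiv ℝ (fun y => fderiv ℝ (u t) y v) 0 v * 0 :=
        tendsto_nhds_unique tendsto_const_nhds hconst
      have hf0 : fderiv ℝ (u t) ((0:ℝ) • v) v = 0 := by linarith [hf00]
      have hsl0 : Tendsto (slope (fun c : ℝ => fderiv ℝ (u t) (c • v) v) 0)
          (nhdsWithin (0:ℝ) {(0:ℝ)}ᶜ) (nhds 0) := by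
        apply tendsto_const_nhds.congr'
        filter_upwards [self_mem_nhdsWithin] with c hc
        have hc' : c ≠ 0 := hc
        rw [slope_def_field, hzero c hc', hf0]
        simp
      have hLv : fderiv ℝ (fun y => fderiv ℝ (u t) y v) 0 v = 0 :=
        tendsto_nhds_unique hsl hsl0
      rw [hLv]
      simp only [abs_zero]
      positivity
    · rw [fderiv_zero_of_not_differentiableAt hdiff]
      simp only [ContinuousLinearMap.zero_apply, abs_zero]
      positivity
  · -- away from the origin
    have hxnorm : 0 < ‖x‖ := norm_pos_iff.mpr hx
    have hs2 : (0:ℝ) < ‖x‖ ^ 2 := by positivity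
    have hS := (hasStrictFDerivAt_norm_sq x).hasFDerivAt
    have hGS := (hasDerivAt_G0 (t := t) hφsmooth hηsmooth hη1 hη0 hs2).comp_hasFDerivAt x hS
    have hG1S := (hasDerivAt_G1 (t := t) hφsmooth hηsmooth hη1 hη0 hs2).comp_hasFDerivAt x hS
    have hc0 := (EuclideanSpace.proj i0 : EuclideanSpace ℝ (Fin n) →L[ℝ] ℝ).hasFDerivAt (x := x)
    have hc1 := (EuclideanSpace.proj i1 : EuclideanSpace ℝ (Fin n) →L[ℝ] ℝ).hasFDerivAt (x := x)
    have hcj := (EuclideanSpace.proj j : EuclideanSpace ℝ (Fin n) →L[ℝ] ℝ).hasFDerivAt (x := x)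
    have hprojj : HasFDerivAt (fun y : EuclideanSpace ℝ (Fin n) => 2 * y j)
        ((2:ℝ) • (EuclideanSpace.proj j : EuclideanSpace ℝ (Fin n) →L[ℝ] ℝ)) x := hcj.const_mul 2
    have hlin := (hc0.mul_const (v i1)).add (hc1.mul_const (v i0))
    have hcomb := ((hc0.mul hc1).mul (hG1S.mul hprojj)).add (hGS.mul hlin)
    have hFev : (fun y => fderiv ℝ (u t) y v) =ᶠ[nhds x]
        (fun y : EuclideanSpace ℝ (Fin n) =>
          y i0 * y i1 * (G1 η φ t (‖y‖ ^ 2) * (2 * y j))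
            + G0 η φ t (‖y‖ ^ 2) * (y i0 * v i1 + y i1 * v i0)) :=
      eventually_of_mem (isOpen_compl_singleton.mem_nhds hx) (fun z hz => hfdF z hz)
    have hOuter := hcomb.congr_of_eventuallyEq hFev
    rw [hOuter.fderiv]
    simp only [Function.comp_apply, PiLp.proj_apply, Pi.mul_apply, Pi.add_apply]
    have hval : (((x i0 * x i1) • (G1 η φ t (‖x‖ ^ 2) • ((2:ℝ) • (EuclideanSpace.proj j : EuclideanSpace ℝ (Fin n) →L[ℝ] ℝ))
            + (2 * x j) • (G2 η φ t (‖x‖ ^ 2) • (2 • (innerSL ℝ x))))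
          + (G1 η φ t (‖x‖ ^ 2) * (2 * x j)) • ((x i0) • (EuclideanSpace.proj i1 : EuclideanSpace ℝ (Fin n) →L[ℝ] ℝ)
            + (x i1) • (EuclideanSpace.proj i0 : EuclideanSpace ℝ (Fin n) →L[ℝ] ℝ)))
        + (G0 η φ t (‖x‖ ^ 2) • ((v i1) • (EuclideanSpace.proj i0 : EuclideanSpace ℝ (Fin n) →L[ℝ] ℝ)
            + (v i0) • (EuclideanSpace.proj i1 : EuclideanSpace ℝ (Fin n) →L[ℝ] ℝ))
          + (x i0 * v i1 + x i1 * v i0) • (G1 η φ t (‖x‖ ^ 2) • (2 • (innerSL ℝ x))))) v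
        = 2 * (x i0 * x i1) * G1 η φ t (‖x‖ ^ 2)
          + 4 * (x i0 * x i1) * (x j) ^ 2 * G2 η φ t (‖x‖ ^ 2)
          + 4 * ((x i0 * v i1 + x i1 * v i0) * x j) * G1 η φ t (‖x‖ ^ 2)
          + 2 * (v i0 * v i1) * G0 η φ t (‖x‖ ^ 2) := by
      simp only [ContinuousLinearMap.add_apply, ContinuousLinearMap.smul_apply,
        innerSL_apply_apply, smul_eq_mul, PiLp.proj_apply]
      rw [show (inner ℝ x v) = x j by rw [hv]; simp [EuclideanSpace.inner_single_right]]
      rw [hvj]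
      ring
    rw [hval]
    -- now the numeric bound
    have hKG1 : ‖x‖ ^ 2 * |G1 η φ t (‖x‖ ^ 2)| ≤ K := by
      have h := (hK t ht ht2 _ hs2).1
      rwa [abs_mul, abs_of_pos hs2] at h
    have hKG2 : (‖x‖ ^ 2) ^ 2 * |G2 η φ t (‖x‖ ^ 2)| ≤ K := by
      have h := (hK t ht ht2 _ hs2).2
      rwa [abs_mul, abs_of_pos (pow_pos hs2 2)] at h
    have h0 := habs x i0
    have h1 := habs x i1
    have hj := habs x j
    have hm1 : |x i0| * |x i1| ≤ ‖x‖ ^ 2 := by nlinarith [abs_nonneg (x i0), abs_nonneg (x i1)]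
    have hmj : |x j| * |x j| ≤ ‖x‖ ^ 2 := by nlinarith [abs_nonneg (x j)]
    have hsum : |x i0 * v i1 + x i1 * v i0| ≤ 2 * ‖x‖ := by
      calc |x i0 * v i1 + x i1 * v i0| ≤ |x i0 * v i1| + |x i1 * v i0| := abs_add_le _ _
        _ = |x i0| * |v i1| + |x i1| * |v i0| := by rw [abs_mul, abs_mul]
        _ ≤ ‖x‖ * 1 + ‖x‖ * 1 := add_le_add
            (mul_le_mul h0 (hvb i1) (abs_nonneg _) (norm_nonneg x))
            (mul_le_mul h1 (hvb i0) (abs_nonneg _) (norm_nonneg x))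
        _ = 2 * ‖x‖ := by ring
    have hT1 : |2 * (x i0 * x i1) * G1 η φ t (‖x‖ ^ 2)| ≤ 2 * K := by
      rw [abs_mul, abs_mul, abs_two, abs_mul]
      nlinarith [abs_nonneg (G1 η φ t (‖x‖ ^ 2)),
        mul_le_mul_of_nonneg_right hm1 (abs_nonneg (G1 η φ t (‖x‖ ^ 2)))]
    have hT2 : |4 * (x i0 * x i1) * (x j) ^ 2 * G2 η φ t (‖x‖ ^ 2)| ≤ 4 * K := by
      rw [abs_mul, abs_mul, abs_mul, abs_mul, abs_pow,
        show |(4:ℝ)| = 4 by norm_num]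
      have hm2 : (|x i0| * |x i1|) * (|x j| ^ 2) ≤ (‖x‖ ^ 2) ^ 2 := by
        have := mul_le_mul hm1 hmj (by positivity) (by positivity)
        nlinarith [this]
      nlinarith [abs_nonneg (G2 η φ t (‖x‖ ^ 2)),
        mul_le_mul_of_nonneg_right hm2 (abs_nonneg (G2 η φ t (‖x‖ ^ 2)))]
    have hT3 : |4 * ((x i0 * v i1 + x i1 * v i0) * x j) * G1 η φ t (‖x‖ ^ 2)| ≤ 8 * K := by
      rw [abs_mul, abs_mul, abs_mul, show |(4:ℝ)| = 4 by norm_num]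
      have hm3 : |x i0 * v i1 + x i1 * v i0| * |x j| ≤ 2 * ‖x‖ ^ 2 := by
        have := mul_le_mul hsum hj (abs_nonneg _) (by positivity)
        nlinarith [this]
      nlinarith [abs_nonneg (G1 η φ t (‖x‖ ^ 2)),
        mul_le_mul_of_nonneg_right hm3 (abs_nonneg (G1 η φ t (‖x‖ ^ 2)))]
    rw [hv01]
    calc |2 * (x i0 * x i1) * G1 η φ t (‖x‖ ^ 2)
          + 4 * (x i0 * x i1) * (x j) ^ 2 * G2 η φ t (‖x‖ ^ 2)
          + 4 * ((x i0 * v i1 + x i1 * v i0) * x j) * G1 η φ t (‖x‖ ^ 2)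
          + 2 * 0 * G0 η φ t (‖x‖ ^ 2)|
        = |2 * (x i0 * x i1) * G1 η φ t (‖x‖ ^ 2)
          + 4 * (x i0 * x i1) * (x j) ^ 2 * G2 η φ t (‖x‖ ^ 2)
          + 4 * ((x i0 * v i1 + x i1 * v i0) * x j) * G1 η φ t (‖x‖ ^ 2)| := by
            rw [mul_zero, zero_mul, add_zero]
      _ ≤ |2 * (x i0 * x i1) * G1 η φ t (‖x‖ ^ 2)
          + 4 * (x i0 * x i1) * (x j) ^ 2 * G2 η φ t (‖x‖ ^ 2)|
          + |4 * ((x i0 * v i1 + x i1 * v i0) * x j) * G1 η φ t (‖x‖ ^ 2)| := abs_add_le _ _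
      _ ≤ |2 * (x i0 * x i1) * G1 η φ t (‖x‖ ^ 2)|
          + |4 * (x i0 * x i1) * (x j) ^ 2 * G2 η φ t (‖x‖ ^ 2)|
          + |4 * ((x i0 * v i1 + x i1 * v i0) * x j) * G1 η φ t (‖x‖ ^ 2)| := by
            linarith [abs_add_le (2 * (x i0 * x i1) * G1 η φ t (‖x‖ ^ 2))
              (4 * (x i0 * x i1) * (x j) ^ 2 * G2 η φ t (‖x‖ ^ 2))]
      _ ≤ 14 * K := by linarith
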